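/- Let v, w : ℝⁿ → ℝⁿ be two bounded vector fields, both Lipschitz with constant L > 0, with flows Φ^v_t and Φ^w_t, and let μ, ν ∈ M be two probability measures. Then for every p ≥ 1 and t ≥ 0: W_p(Φ^v_t # μ, Φ^w_t # ν) ≤ e^{((p+1)/p) L t} · W_p(μ, ν) + (e^{Lt/p}(e^{Lt} − 1)/L) · ‖v − w‖_{C⁰}. -/

import Mathlib

open MeasureTheory Set
open scoped RealInnerProductSpace

noncomputable section

abbrev En (n : ℕ) : Type := EuclideanSpace ℝ (Fin n)

/-- `𝓜`: probability measures on ℝⁿ with compact support, absolutely continuous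
with respect to Lebesgue measure. -/
def MemM (n : ℕ) (μ : Measure (En n)) : Prop :=
  IsProbabilityMeasure μ ∧ μ ≪ (volume : Measure (En n)) ∧
    ∃ K : Set (En n), IsCompact K ∧ μ Kᶜ = 0

/-- A finite positive measure on ℝⁿ, absolutely continuous with respect to Lebesgue
measure and compactly supported. -/
def NiceMeasure (n : ℕ) (μ : Measure (En n)) : Prop :=
  IsFiniteMeasure μ ∧ μ ≪ (volume : Measure (En n)) ∧
    ∃ K : Set (En n), IsCompact K ∧ μ Kᶜ = 0

/-- Wasserstein distance of exponent `p`, in the Monge (transport-map) formulation: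
`W_p(μ,ν) = inf { (∫ ‖γ x - x‖^p dμ)^(1/p) : γ measurable, γ#μ = ν }`. -/
def Wp (n : ℕ) (p : ℝ) (μ ν : Measure (En n)) : ℝ :=
  sInf { c : ℝ | ∃ γ : En n → En n, Measurable γ ∧ Measure.map γ μ = ν ∧
    c = (∫ x, ‖γ x - x‖ ^ p ∂μ) ^ (1 / p) }

/-- `Φ` is the flow of the vector field `v`: `Φ 0 x = x` and `∂ₜ Φ t x = v (Φ t x)`. -/
def IsFlow (n : ℕ) (v : En n → En n) (Φ : ℝ → En n → En n) : Prop :=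
  (∀ x, Φ 0 x = x) ∧ ∀ x t, HasDerivAt (fun s => Φ s x) (v (Φ t x)) t

/-- Hypothesis (H): `v[μ]` is `C¹`, uniformly Lipschitz (constant `L`), uniformly
bounded (constant `M`), and `μ ↦ v[μ]` is Lipschitz from `(𝓜, W_p)` to `C⁰` with
constant `K`. -/
def HypH (n : ℕ) (p : ℝ) (v : Measure (En n) → En n → En n) (L M K : ℝ) : Prop :=
  0 < L ∧ 0 < M ∧ 0 < K ∧
  (∀ μ, MemM n μ → ContDiff ℝ 1 (v μ)) ∧
  (∀ μ, MemM n μ → ∀ x y, ‖v μ x - v μ y‖ ≤ L * ‖x - y‖) ∧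
  (∀ μ, MemM n μ → ∀ x, ‖v μ x‖ ≤ M) ∧
  (∀ μ ν, MemM n μ → MemM n ν → ∀ x, ‖v μ x - v ν x‖ ≤ K * Wp n p μ ν)

/-- Scheme 1 (semi-discrete in time Lagrangian scheme) with time step `Δt` on `[0,T]`:
`μ 0 = μ₀` and, on each interval `[iΔt, (i+1)Δt]`, `μ t` is the push-forward of
`μ (iΔt)` by the flow of the frozen vector field `v[μ (iΔt)]`. -/
def Scheme1 (n : ℕ) (v : Measure (En n) → En n → En n) (μ₀ : Measure (En n))
    (Δt T : ℝ) (μ : ℝ → Measure (En n)) : Prop :=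
  μ 0 = μ₀ ∧
  ∀ i : ℕ, ∀ t : ℝ, (i : ℝ) * Δt ≤ t → t ≤ ((i : ℝ) + 1) * Δt → t ≤ T →
    ∃ Φ : ℝ → En n → En n, IsFlow n (v (μ ((i : ℝ) * Δt))) Φ ∧
      μ t = Measure.map (Φ (t - (i : ℝ) * Δt)) (μ ((i : ℝ) * Δt))

/-- Weak (distributional) solution of `∂ₜ μₜ + ∇·(v[μₜ] μₜ) = 0` on `[0,T]`:
for every test function `f ∈ C_c^∞([0,T] × ℝⁿ)`,
`∫_0^T ∫ (∂ₜ f + v[μₜ]·∇f) dμₜ dt = 0`. -/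
def IsWeakSolution (n : ℕ) (v : Measure (En n) → En n → En n) (T : ℝ)
    (μ : ℝ → Measure (En n)) : Prop :=
  ∀ f : ℝ → En n → ℝ,
    ContDiff ℝ (⊤ : ℕ∞) (Function.uncurry f) →
    HasCompactSupport (Function.uncurry f) →
    (∫ t in Icc (0 : ℝ) T,
      ∫ x, (deriv (fun s => f s x) t + ⟪v (μ t) x, gradient (fun y => f t y) x⟫)
        ∂(μ t)) = 0

/-- Continuity in time with respect to the Wasserstein distance `W_p`, on `[0,T]`. -/
def WpContinuousOn (n : ℕ) (p T : ℝ) (μ : ℝ → Measure (En n)) : Prop :=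
  ∀ t ∈ Icc (0 : ℝ) T, ∀ ε > 0, ∃ δ > 0, ∀ s ∈ Icc (0 : ℝ) T, |s - t| < δ →
    Wp n p (μ s) (μ t) < ε

/-- The axis-parallel grid cell of side `Δx` indexed by `k : Fin n → ℤ`. -/
def gridCell (n : ℕ) (Δx : ℝ) (k : Fin n → ℤ) : Set (En n) :=
  {x | ∀ i, (k i : ℝ) * Δx ≤ x i ∧ x i < ((k i : ℝ) + 1) * Δx}

/-- The index of the grid cell of side `Δx` containing `x`. -/
def gridIdx (n : ℕ) (Δx : ℝ) (x : En n) : Fin n → ℤ := fun i => ⌊x i / Δx⌋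

/-- Grid discretization `G[μ]`: the measure which, on each cell `□` of the grid of
side `Δx`, has constant density `μ(□)/Δxⁿ` with respect to Lebesgue measure. -/
def gridDisc (n : ℕ) (Δx : ℝ) (μ : Measure (En n)) : Measure (En n) :=
  (volume : Measure (En n)).withDensity
    (fun x => μ (gridCell n Δx (gridIdx n Δx x)) / ENNReal.ofReal (Δx ^ n))

/-- `L¹` distance between two measures, via their densities (Radon–Nikodym
derivatives) with respect to Lebesgue measure. -/
def L1dist (n : ℕ) (μ ν : Measure (En n)) : ℝ :=
  ∫ x, |(μ.rnDeriv (volume : Measure (En n)) x).toReal -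
        (ν.rnDeriv (volume : Measure (En n)) x).toReal|

/-! The flows of two `L`-Lipschitz fields started at `x` and `y` stay within
`e^{Lt}|x - y| + (e^{Lt} - 1)/L ‖v - w‖` of each other (Grönwall). Conjugating a transport map
`γ` from `μ` to `ν` by the flows, `Φʷₜ ∘ γ ∘ (Φᵛₜ)⁻¹` transports `Φᵛₜ#μ` to `Φʷₜ#ν`, and
Minkowski's inequality in `L^p(μ)` turns the pointwise bound into a bound on its cost. This
gives `e^{Lt} W_p(μ,ν) + (e^{Lt} - 1)/L ‖v - w‖`, which is below the stated bound. -/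

open scoped NNReal ENNReal

namespace IsFlow

variable {n : ℕ} {v w : En n → En n} {Φ Ψ : ℝ → En n → En n} {K : ℝ≥0}

theorem continuous_time (hΦ : IsFlow n v Φ) (x : En n) : Continuous fun s => Φ s x :=
  continuous_iff_continuousAt.2 fun s => (hΦ.2 x s).continuousAt

theorem neg (hΦ : IsFlow n v Φ) : IsFlow n (-v) fun s => Φ (-s) :=
  ⟨fun x => by simpa using hΦ.1 x, fun x s => by
    simpa [Function.comp_def] using (hΦ.2 x (-s)).scomp s (hasDerivAt_neg s)⟩

theorem add_apply (hΦ : IsFlow n v Φ) (hv : LipschitzWith K v) (s t : ℝ) (x : En n) :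
    Φ (s + t) x = Φ s (Φ t x) := by
  have hshift : ∀ r, HasDerivAt (fun s => Φ (s + t) x) (v (Φ (r + t) x)) r := fun r => by
    simpa using (hΦ.2 x (r + t)).comp_add_const r t
  have := ODE_solution_unique_univ (v := fun _ => v) (s := fun _ => univ) (t₀ := 0)
    (fun _ => hv.lipschitzOnWith) (fun r => ⟨hshift r, trivial⟩)
    (fun r => ⟨hΦ.2 (Φ t x) r, trivial⟩) (by simp [hΦ.1])
  exact congrFun this s

theorem neg_apply_apply (hΦ : IsFlow n v Φ) (hv : LipschitzWith K v) (t : ℝ) (x : En n) :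
    Φ (-t) (Φ t x) = x := by
  rw [← hΦ.add_apply hv, neg_add_cancel, hΦ.1]

theorem dist_le_gronwallBound (hΦ : IsFlow n v Φ) (hΨ : IsFlow n w Ψ) (hw : LipschitzWith K w)
    {ε : ℝ} (hvw : ∀ x, dist (v x) (w x) ≤ ε) {t : ℝ} (ht : 0 ≤ t) (x y : En n) :
    dist (Ψ t y) (Φ t x) ≤ gronwallBound (dist y x) K ε t := by
  simpa using dist_le_of_approx_trajectories_ODE (v := fun _ => w) (fun _ => hw)
    (hΨ.continuous_time y).continuousOn (fun s _ => (hΨ.2 y s).hasDerivWithinAt)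
    (fun s _ => (dist_self _).le) (hΦ.continuous_time x).continuousOn
    (fun s _ => (hΦ.2 x s).hasDerivWithinAt) (fun s _ => hvw _)
    (by simp [hΦ.1, hΨ.1]) t ⟨ht, le_rfl⟩

theorem dist_le_exp_mul_add (hΦ : IsFlow n v Φ) (hΨ : IsFlow n w Ψ) (hw : LipschitzWith K w)
    (hK : K ≠ 0) {ε : ℝ} (hvw : ∀ x, dist (v x) (w x) ≤ ε) {t : ℝ} (ht : 0 ≤ t) (x y : En n) :
    dist (Ψ t y) (Φ t x) ≤ Real.exp (K * t) * dist y x + ε / K * (Real.exp (K * t) - 1) := by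
  have := hΦ.dist_le_gronwallBound hΨ hw hvw ht x y
  rw [gronwallBound_of_K_ne_0 (NNReal.coe_ne_zero.2 hK)] at this
  simpa only [mul_comm (dist y x)] using this

theorem dist_le_exp_mul (hΦ : IsFlow n v Φ) (hv : LipschitzWith K v) {t : ℝ} (ht : 0 ≤ t)
    (x y : En n) : dist (Φ t x) (Φ t y) ≤ Real.exp (K * t) * dist x y := by
  have := hΦ.dist_le_gronwallBound hΦ hv (fun z => (dist_self (v z)).le) ht y x
  rwa [gronwallBound_ε0, mul_comm] at this

theorem continuous (hΦ : IsFlow n v Φ) (hv : LipschitzWith K v) (t : ℝ) : Continuous (Φ t) := by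
  rcases le_total 0 t with ht | ht
  · exact (LipschitzWith.of_dist_le' (hΦ.dist_le_exp_mul hv ht)).continuous
  · simpa using (LipschitzWith.of_dist_le'
      (hΦ.neg.dist_le_exp_mul hv.neg (neg_nonneg.2 ht))).continuous

end IsFlow

theorem integral_norm_rpow_rpow_le_of_norm_le {α E : Type*} [MeasurableSpace α]
    [NormedAddCommGroup E] {μ : Measure α} [IsProbabilityMeasure μ] {p a C : ℝ} (hp : 1 ≤ p)
    (ha : 0 ≤ a) (hC : 0 ≤ C) {f g : α → E} (hf : AEStronglyMeasurable f μ)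
    (hg : MemLp g (ENNReal.ofReal p) μ) (hfg : ∀ᵐ x ∂μ, ‖f x‖ ≤ a * ‖g x‖ + C) :
    (∫ x, ‖f x‖ ^ p ∂μ) ^ (1 / p) ≤ a * (∫ x, ‖g x‖ ^ p ∂μ) ^ (1 / p) + C := by
  have hp0 : (0 : ℝ) < p := zero_lt_one.trans_le hp
  have hP0 : ENNReal.ofReal p ≠ 0 := by simpa using hp0
  have key : eLpNorm f (ENNReal.ofReal p) μ ≤
      ENNReal.ofReal a * eLpNorm g (ENNReal.ofReal p) μ + ENNReal.ofReal C :=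
    calc eLpNorm f (ENNReal.ofReal p) μ
        ≤ eLpNorm (a • fun x => ‖g x‖) (ENNReal.ofReal p) μ +
            eLpNorm (fun _ => C) (ENNReal.ofReal p) μ :=
          (eLpNorm_mono_ae_real hfg).trans
            (eLpNorm_add_le (hg.1.norm.const_smul a) aestronglyMeasurable_const
              (ENNReal.one_le_ofReal.2 hp))
      _ = ENNReal.ofReal a * eLpNorm g (ENNReal.ofReal p) μ + ENNReal.ofReal C := by
          rw [eLpNorm_const_smul, eLpNorm_norm,
            eLpNorm_const C hP0 (IsProbabilityMeasure.ne_zero μ)]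
          simp [Real.enorm_eq_ofReal ha, Real.enorm_eq_ofReal hC]
  have hf' : MemLp f (ENNReal.ofReal p) μ := ⟨hf, key.trans_lt (by finiteness)⟩
  rw [hf'.eLpNorm_eq_integral_rpow_norm hP0 ENNReal.ofReal_ne_top,
    hg.eLpNorm_eq_integral_rpow_norm hP0 ENNReal.ofReal_ne_top, ENNReal.toReal_ofReal hp0.le,
    ← ENNReal.ofReal_mul ha, ← ENNReal.ofReal_add (by positivity) hC,
    ENNReal.ofReal_le_ofReal_iff (by positivity)] at key
  simpa [one_div] using key

theorem memLp_sub_of_map_eq {n : ℕ} {μ : Measure (En n)} [IsFiniteMeasure μ]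
    {γ : En n → En n} (hγ : Measurable γ) (hμ : ∃ K, IsCompact K ∧ μ Kᶜ = 0)
    (hγμ : ∃ K, IsCompact K ∧ Measure.map γ μ Kᶜ = 0) (q : ℝ≥0∞) :
    MemLp (fun x => γ x - x) q μ := by
  obtain ⟨K₁, hK₁, hμK₁⟩ := hμ
  obtain ⟨K₂, hK₂, hγK₂⟩ := hγμ
  obtain ⟨R₁, hR₁⟩ := hK₁.isBounded.exists_norm_le
  obtain ⟨R₂, hR₂⟩ := hK₂.isBounded.exists_norm_le
  rw [Measure.map_apply hγ hK₂.measurableSet.compl] at hγK₂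
  have hx : ∀ᵐ x ∂μ, x ∈ K₁ := mem_ae_iff.2 hμK₁
  have hγx : ∀ᵐ x ∂μ, γ x ∈ K₂ := mem_ae_iff.2 hγK₂
  refine MemLp.of_bound (hγ.sub measurable_id).aestronglyMeasurable (R₂ + R₁) ?_
  filter_upwards [hx, hγx] with x hx hγx
  exact (norm_sub_le _ _).trans (add_le_add (hR₂ _ hγx) (hR₁ _ hx))

section Wasserstein

variable {n : ℕ} {p : ℝ} {μ ν : Measure (En n)}

theorem Wp_nonneg : 0 ≤ Wp n p μ ν :=
  Real.sInf_nonneg <| by rintro _ ⟨γ, -, -, rfl⟩; positivity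

theorem Wp_le_of_map_eq {γ : En n → En n} (hγ : Measurable γ) (hγμ : Measure.map γ μ = ν) :
    Wp n p μ ν ≤ (∫ x, ‖γ x - x‖ ^ p ∂μ) ^ (1 / p) :=
  csInf_le ⟨0, by rintro _ ⟨γ, -, -, rfl⟩; positivity⟩ ⟨γ, hγ, hγμ, rfl⟩

theorem le_Wp_of_forall_map_eq {c : ℝ} (hex : ∃ γ, Measurable γ ∧ Measure.map γ μ = ν)
    (hc : ∀ γ, Measurable γ → Measure.map γ μ = ν → c ≤ (∫ x, ‖γ x - x‖ ^ p ∂μ) ^ (1 / p)) :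
    c ≤ Wp n p μ ν := by
  obtain ⟨γ, hγ, hγμ⟩ := hex
  exact le_csInf ⟨_, γ, hγ, hγμ, rfl⟩ <| by rintro _ ⟨γ, hγ, hγμ, rfl⟩; exact hc γ hγ hγμ

theorem Wp_eq_zero_of_not_exists (h : ¬∃ γ, Measurable γ ∧ Measure.map γ μ = ν) :
    Wp n p μ ν = 0 := by
  rw [Wp, ← Real.sInf_empty]
  congr 1
  exact eq_empty_of_forall_notMem fun _ ⟨γ, hγ, hγμ, _⟩ => h ⟨γ, hγ, hγμ⟩

end Wasserstein

section Transport

variable {n : ℕ} {p a C : ℝ} {μ ν : Measure (En n)} [IsProbabilityMeasure μ]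
  {F F' G : En n → En n}

theorem Wp_map_map_le_of_map_eq (hp : 1 ≤ p) (ha : 0 ≤ a) (hC : 0 ≤ C)
    (hF : Measurable F) (hF' : Measurable F') (hFF' : Function.LeftInverse F' F)
    (hG : Measurable G) (hFG : ∀ x y, dist (G y) (F x) ≤ a * dist y x + C)
    (hμ : ∃ K, IsCompact K ∧ μ Kᶜ = 0) (hν : ∃ K, IsCompact K ∧ ν Kᶜ = 0)
    {γ : En n → En n} (hγ : Measurable γ) (hγμ : Measure.map γ μ = ν) :
    Wp n p (Measure.map F μ) (Measure.map G ν) ≤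
      a * (∫ x, ‖γ x - x‖ ^ p ∂μ) ^ (1 / p) + C := by
  have hconj : (G ∘ γ ∘ F') ∘ F = G ∘ γ := funext fun x => by simp [hFF' x]
  have hγ' : Measurable (G ∘ γ ∘ F') := hG.comp (hγ.comp hF')
  calc Wp n p (Measure.map F μ) (Measure.map G ν)
      ≤ (∫ x, ‖(G ∘ γ ∘ F') x - x‖ ^ p ∂(Measure.map F μ)) ^ (1 / p) :=
        Wp_le_of_map_eq hγ' <| by
          rw [Measure.map_map hγ' hF, hconj, ← Measure.map_map hG hγ, hγμ]
    _ = (∫ x, ‖G (γ x) - F x‖ ^ p ∂μ) ^ (1 / p) := by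
        rw [integral_map (f := fun x => ‖(G ∘ γ ∘ F') x - x‖ ^ p) hF.aemeasurable
          ((hγ'.sub measurable_id).norm.pow_const p).aestronglyMeasurable]
        simp [hFF' _]
    _ ≤ a * (∫ x, ‖γ x - x‖ ^ p ∂μ) ^ (1 / p) + C :=
        integral_norm_rpow_rpow_le_of_norm_le hp ha hC
          ((hG.comp hγ).sub hF).aestronglyMeasurable
          (memLp_sub_of_map_eq hγ hμ (hγμ ▸ hν) _)
          (ae_of_all _ fun x => by simpa [dist_eq_norm] using hFG x (γ x))

theorem Wp_map_map_le {G' : En n → En n} (hp : 1 ≤ p) (ha : 0 < a) (hC : 0 ≤ C)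
    (hF : Measurable F) (hF' : Measurable F') (hFF' : Function.LeftInverse F' F)
    (hG : Measurable G) (hG' : Measurable G') (hGG' : Function.LeftInverse G' G)
    (hFG : ∀ x y, dist (G y) (F x) ≤ a * dist y x + C)
    (hμ : ∃ K, IsCompact K ∧ μ Kᶜ = 0) (hν : ∃ K, IsCompact K ∧ ν Kᶜ = 0) :
    Wp n p (Measure.map F μ) (Measure.map G ν) ≤ a * Wp n p μ ν + C := by
  by_cases hex : ∃ γ, Measurable γ ∧ Measure.map γ μ = ν
  · have : (Wp n p (Measure.map F μ) (Measure.map G ν) - C) / a ≤ Wp n p μ ν :=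
      le_Wp_of_forall_map_eq hex fun γ hγ hγμ => by
        rw [div_le_iff₀' ha, sub_le_iff_le_add]
        exact Wp_map_map_le_of_map_eq hp ha.le hC hF hF' hFF' hG hFG hμ hν hγ hγμ
    rwa [div_le_iff₀' ha, sub_le_iff_le_add] at this
  · -- conjugating by the invertible maps, there is no transport map on either side: both `Wp` are
    -- `sInf ∅ = 0`
    have hex' : ¬∃ γ, Measurable γ ∧ Measure.map γ (Measure.map F μ) = Measure.map G ν := by
      rintro ⟨γ, hγ, hγμ⟩
      refine hex ⟨G' ∘ γ ∘ F, hG'.comp (hγ.comp hF), ?_⟩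
      rw [← Measure.map_map hG' (hγ.comp hF), ← Measure.map_map hγ hF, hγμ,
        Measure.map_map hG' hG, hGG'.comp_eq_id, Measure.map_id]
    rw [Wp_eq_zero_of_not_exists hex, Wp_eq_zero_of_not_exists hex', mul_zero, zero_add]
    exact hC

end Transport

theorem exp_mul_add_le {p L t W d : ℝ} (hp : 0 < p) (hL : 0 < L) (ht : 0 ≤ t) (hW : 0 ≤ W)
    (hd : 0 ≤ d) :
    Real.exp (L * t) * W + d / L * (Real.exp (L * t) - 1) ≤
      Real.exp ((p + 1) / p * L * t) * W +
        Real.exp (L * t / p) * (Real.exp (L * t) - 1) / L * d := by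
  have hexp : L * t ≤ (p + 1) / p * L * t := by
    have : (p + 1) / p * L * t = L * t + L * t / p := by field_simp
    rw [this]
    exact le_add_of_nonneg_right (by positivity)
  have hE : 0 ≤ (Real.exp (L * t) - 1) / L * d :=
    mul_nonneg (div_nonneg (by linarith [Real.one_le_exp (by positivity : 0 ≤ L * t)]) hL.le) hd
  calc Real.exp (L * t) * W + d / L * (Real.exp (L * t) - 1)
      = Real.exp (L * t) * W + 1 * ((Real.exp (L * t) - 1) / L * d) := by ring
    _ ≤ Real.exp ((p + 1) / p * L * t) * W +
          Real.exp (L * t / p) * ((Real.exp (L * t) - 1) / L * d) := by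
        gcongr
        exact Real.one_le_exp (by positivity)
    _ = _ := by ring

/-- `W_p(Φᵛₜ#μ, Φʷₜ#ν) ≤ e^{((p+1)/p)Lt} W_p(μ,ν) + (e^{Lt/p}(e^{Lt}-1)/L)‖v-w‖_{C⁰}`
for the flows of two bounded `L`-Lipschitz vector fields. -/
theorem stmt5 (n : ℕ) (p L t : ℝ) (hp : 1 ≤ p) (hL : 0 < L) (ht : 0 ≤ t)
    (v w : En n → En n)
    (hvB : ∃ C : ℝ, ∀ x, ‖v x‖ ≤ C) (hwB : ∃ C : ℝ, ∀ x, ‖w x‖ ≤ C)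
    (hvL : ∀ x y, ‖v x - v y‖ ≤ L * ‖x - y‖)
    (hwL : ∀ x y, ‖w x - w y‖ ≤ L * ‖x - y‖)
    (Φv Φw : ℝ → En n → En n) (hΦv : IsFlow n v Φv) (hΦw : IsFlow n w Φw)
    (μ ν : Measure (En n)) (hμ : MemM n μ) (hν : MemM n ν) :
    Wp n p (Measure.map (Φv t) μ) (Measure.map (Φw t) ν) ≤
      Real.exp ((p + 1) / p * L * t) * Wp n p μ ν +
        Real.exp (L * t / p) * (Real.exp (L * t) - 1) / L * (⨆ x, ‖v x - w x‖) := by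
  have := hμ.1
  have hv : LipschitzWith ⟨L, hL.le⟩ v := .of_dist_le_mul fun x y => by
    rw [dist_eq_norm, dist_eq_norm]; exact hvL x y
  have hw : LipschitzWith ⟨L, hL.le⟩ w := .of_dist_le_mul fun x y => by
    rw [dist_eq_norm, dist_eq_norm]; exact hwL x y
  obtain ⟨Cv, hCv⟩ := hvB
  obtain ⟨Cw, hCw⟩ := hwB
  have hvw (x : En n) : dist (v x) (w x) ≤ ⨆ x, ‖v x - w x‖ := by
    rw [dist_eq_norm]
    refine le_ciSup (f := fun x => ‖v x - w x‖) ⟨Cv + Cw, ?_⟩ x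
    rintro _ ⟨y, rfl⟩
    exact (norm_sub_le _ _).trans (add_le_add (hCv y) (hCw y))
  have hd : 0 ≤ ⨆ x, ‖v x - w x‖ := dist_nonneg.trans (hvw 0)
  have hE : 1 ≤ Real.exp (L * t) := Real.one_le_exp (by positivity)
  calc Wp n p (Measure.map (Φv t) μ) (Measure.map (Φw t) ν)
      ≤ Real.exp (L * t) * Wp n p μ ν + (⨆ x, ‖v x - w x‖) / L * (Real.exp (L * t) - 1) :=
        Wp_map_map_le hp (Real.exp_pos _) (mul_nonneg (div_nonneg hd hL.le) (sub_nonneg.2 hE))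
          (hΦv.continuous hv t).measurable (hΦv.continuous hv (-t)).measurable
          (hΦv.neg_apply_apply hv t) (hΦw.continuous hw t).measurable
          (hΦw.continuous hw (-t)).measurable (hΦw.neg_apply_apply hw t)
          (hΦv.dist_le_exp_mul_add hΦw hw (ne_of_gt hL) hvw ht) hμ.2.2 hν.2.2
    _ ≤ _ := exp_mul_add_le (by linarith) hL ht Wp_nonneg hd

end
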